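/- arXiv:2305.17391 — 4 statements merged into one kernel-verified Lean document; each statement's English description precedes it below -/
import Mathlib

section
/- Let h : ℝ → ℝ be uniformly continuous on [1, ∞). If the limit as t → ∞ of ∫_1^t h(s) ds exists as a real number, then h(t) → 0 as t → ∞. -/
/-!
For a fixed window length `d`, `h t` differs from its mean `d⁻¹ ∫_t^{t+d} h` by at most the
oscillation of `h` on `[t, t + d]`, which uniform continuity makes small once `d` is small.
The mean is `d⁻¹ (F (t + d) - F t)` for the convergent `F t = ∫_1^t h`, so it tends to `0`.
-/

open Filter Set MeasureTheory Topology Interval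

theorem Filter.Tendsto.comp_add_const_sub {G : Type*} [AddGroup G] [TopologicalSpace G]
    [IsTopologicalAddGroup G] {F : ℝ → G} {L : G} (hF : Tendsto F atTop (𝓝 L))
    (d : ℝ) : Tendsto (fun t => F (t + d) - F t) atTop (𝓝 0) :=
  sub_self L ▸ (hF.comp (tendsto_atTop_add_const_right _ d tendsto_id)).sub hF

theorem ContinuousOn.intervalIntegrable_of_Ici {E : Type*} [NormedAddCommGroup E] {f : ℝ → E}
    {a b c : ℝ} (hf : ContinuousOn f (Ici a)) (hb : a ≤ b) (hc : a ≤ c) :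
    IntervalIntegrable f volume b c :=
  (hf.mono (ordConnected_Ici.uIcc_subset hb hc)).intervalIntegrable

variable {E : Type*} [NormedAddCommGroup E] [NormedSpace ℝ E] [CompleteSpace E]

theorem norm_smul_sub_intervalIntegral_le {f : ℝ → E} {a b ε : ℝ} (c : E)
    (hf : IntervalIntegrable f volume a b) (hfc : ∀ x ∈ Ι a b, ‖c - f x‖ ≤ ε) :
    ‖(b - a) • c - ∫ x in a..b, f x‖ ≤ ε * |b - a| := by
  rw [← intervalIntegral.integral_const,
    ← intervalIntegral.integral_sub intervalIntegrable_const hf]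
  exact intervalIntegral.norm_integral_le_of_norm_le_const hfc

theorem tendsto_zero_of_uniformContinuousOn_of_tendsto_intervalIntegral
    {h : ℝ → E} {a : ℝ} (huc : UniformContinuousOn h (Ici a))
    (hint : ∀ d > 0, Tendsto (fun t => ∫ s in t..t + d, h s) atTop (𝓝 0)) :
    Tendsto h atTop (𝓝 0) := by
  rw [Metric.tendsto_nhds]
  intro ε hε
  obtain ⟨δ, hδ, hclose⟩ := Metric.uniformContinuousOn_iff.1 huc (ε / 2) (half_pos hε)
  have hd : 0 < δ / 2 := half_pos hδ
  filter_upwards [eventually_ge_atTop a,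
    Metric.tendsto_nhds.1 (hint (δ / 2) hd) (δ / 2 * (ε / 2)) (by positivity)] with t hat hsmall
  rw [dist_zero_right] at hsmall ⊢
  have hnear : ∀ s ∈ Ι t (t + δ / 2), ‖h t - h s‖ ≤ ε / 2 := by
    intro s hs
    rw [uIoc_of_le (by linarith)] at hs
    obtain ⟨hts, hst⟩ := hs
    rw [← dist_eq_norm]
    refine (hclose t hat s (hat.trans hts.le) ?_).le
    rw [Real.dist_eq, abs_of_neg (by linarith)]
    linarith
  have havg : ‖(δ / 2) • h t - ∫ s in t..t + δ / 2, h s‖ ≤ δ / 2 * (ε / 2) := by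
    have := norm_smul_sub_intervalIntegral_le (h t)
      (huc.continuousOn.intervalIntegrable_of_Ici hat (by linarith)) hnear
    rwa [add_sub_cancel_left, abs_of_pos hd, mul_comm] at this
  have : δ / 2 * ‖h t‖ < δ / 2 * ε := by
    calc δ / 2 * ‖h t‖ = ‖(δ / 2) • h t‖ := by rw [norm_smul, Real.norm_of_nonneg hd.le]
      _ ≤ ‖(δ / 2) • h t - ∫ s in t..t + δ / 2, h s‖ + ‖∫ s in t..t + δ / 2, h s‖ :=
        norm_le_norm_sub_add _ _
      _ < δ / 2 * (ε / 2) + δ / 2 * (ε / 2) := by linarith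
      _ = δ / 2 * ε := by ring
  exact lt_of_mul_lt_mul_left this hd.le

/-- Barbălat's Lemma: if `h` is uniformly continuous on `[1, ∞)` and
`∫_1^t h(s) ds` converges to a real limit as `t → ∞`, then `h(t) → 0`. -/
theorem barbalat (h : ℝ → ℝ)
    (huc : UniformContinuousOn h (Set.Ici 1))
    (hlim : ∃ L : ℝ, Filter.Tendsto (fun t => ∫ s in (1:ℝ)..t, h s)
      Filter.atTop (nhds L)) :
    Filter.Tendsto h Filter.atTop (nhds 0) := by
  obtain ⟨L, hL⟩ := hlim
  refine tendsto_zero_of_uniformContinuousOn_of_tendsto_intervalIntegral huc fun d _ => ?_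
  refine (hL.comp_add_const_sub d).congr' ?_
  filter_upwards [eventually_ge_atTop 1] with t ht
  have hcont := huc.continuousOn
  exact intervalIntegral.integral_interval_sub_left
    (hcont.intervalIntegrable_of_Ici le_rfl (by linarith))
    (hcont.intervalIntegrable_of_Ici le_rfl ht)
end

section
/- Let d1, d2, u*, v*, w* > 0, let ξ, χ, u, v ≥ 0, and suppose ξ·χ²·v*·w*·u³·v² + χ²·w*·(d1·u* + d2·v*)·u²·v² + ξ²·(v*)²·u² ≤ 4·d1·d2·u*·v*. Then the symmetric 3×3 real matrix B with rows (d1·u*, -ξ·v*·u/2, -χ·w*·u·v/2), (-ξ·v*·u/2, d2·v*, -χ·w*·u·v/2), (-χ·w*·u·v/2, -χ·w*·u·v/2, w*) is positive semidefinite. -/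
/-!
Write `t = χuv/2` and `k = w* t²`. Completing the square in the third variable gives
`x B xᵀ = w* (x₂ - t (x₀ + x₁))² + (d1 u* - k) x₀² - 2 (ξ v* u / 2 + k) x₀ x₁ + (d2 v* - k) x₁²`,
and the smallness condition is exactly four times the discriminant condition
`(ξ v* u / 2 + k)² ≤ (d1 u* - k)(d2 v* - k)` for the remaining binary form.
-/

open Matrix

lemma binary_quadratic_nonneg {a b e : ℝ} (ha : 0 ≤ a) (hb : 0 ≤ b) (h : e ^ 2 ≤ a * b)
    (x y : ℝ) : 0 ≤ a * x ^ 2 - 2 * e * x * y + b * y ^ 2 := by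
  rcases ha.eq_or_lt with rfl | ha
  · obtain rfl : e = 0 := by nlinarith
    nlinarith [sq_nonneg y]
  · have hscaled : a * (a * x ^ 2 - 2 * e * x * y + b * y ^ 2) =
        (a * x - e * y) ^ 2 + (a * b - e ^ 2) * y ^ 2 := by ring
    refine nonneg_of_mul_nonneg_right ?_ ha
    rw [hscaled]
    nlinarith [sq_nonneg (a * x - e * y), sq_nonneg y]

lemma le_of_sq_add_le_mul_sub_sub {P S Q k : ℝ} (hP : 0 ≤ P) (hS : 0 < S) (hQ : 0 ≤ Q)
    (hk : 0 ≤ k) (h : (Q + k) ^ 2 ≤ (P - k) * (S - k)) : k ≤ P := by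
  have : k * S ≤ P * S := by nlinarith [mul_nonneg hk hP, mul_nonneg hQ hk]
  exact le_of_mul_le_mul_right this hS

/-- The hypotheses say that the Schur complement of the entry `w`, the `2 × 2` matrix with
diagonal `p - w t², s - w t²` and off-diagonal entries `-(q + w t²)`, is positive semidefinite. -/
theorem posSemidef_of_schur_complement {p q s w t : ℝ} (hw : 0 ≤ w)
    (hp : 0 ≤ p - w * t ^ 2) (hs : 0 ≤ s - w * t ^ 2)
    (hq : (q + w * t ^ 2) ^ 2 ≤ (p - w * t ^ 2) * (s - w * t ^ 2)) :
    (!![p, -q, -(w * t); -q, s, -(w * t); -(w * t), -(w * t), w]).PosSemidef := by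
  refine PosSemidef.of_dotProduct_mulVec_nonneg ?_ fun x => ?_
  · ext i j
    fin_cases i <;> fin_cases j <;> simp
  · have hform : star x ⬝ᵥ (!![p, -q, -(w * t); -q, s, -(w * t); -(w * t), -(w * t), w] *ᵥ x) =
        w * (x 2 - t * (x 0 + x 1)) ^ 2 + ((p - w * t ^ 2) * x 0 ^ 2
          - 2 * (q + w * t ^ 2) * x 0 * x 1 + (s - w * t ^ 2) * x 1 ^ 2) := by
      simp [dotProduct, mulVec, Fin.sum_univ_three]
      ring
    rw [hform]
    have := binary_quadratic_nonneg hp hs hq (x 0) (x 1)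
    positivity

theorem B_posSemidef_general (d1 d2 us vs ws ξ χ u v : ℝ)
    (hd1 : 0 < d1) (hd2 : 0 < d2) (hus : 0 < us) (hvs : 0 < vs) (hws : 0 < ws)
    (hξ : 0 ≤ ξ) (hu : 0 ≤ u)
    (hcond : ξ * χ ^ 2 * vs * ws * u ^ 3 * v ^ 2
      + χ ^ 2 * ws * (d1 * us + d2 * vs) * u ^ 2 * v ^ 2
      + ξ ^ 2 * vs ^ 2 * u ^ 2 ≤ 4 * d1 * d2 * us * vs)
    (B : Matrix (Fin 3) (Fin 3) ℝ)
    (hB : B = !![d1 * us, -(ξ * vs * u) / 2, -(χ * ws * u * v) / 2;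
                 -(ξ * vs * u) / 2, d2 * vs, -(χ * ws * u * v) / 2;
                 -(χ * ws * u * v) / 2, -(χ * ws * u * v) / 2, ws]) :
    B.PosSemidef := by
  set k := ws * (χ * u * v / 2) ^ 2
  have hk : 0 ≤ k := by positivity
  have hQ : 0 ≤ ξ * vs * u / 2 := by positivity
  have hdiscr : (ξ * vs * u / 2 + k) ^ 2 ≤ (d1 * us - k) * (d2 * vs - k) := by
    linear_combination hcond / 4
  have hk1 : k ≤ d1 * us :=
    le_of_sq_add_le_mul_sub_sub (by positivity) (by positivity) hQ hk hdiscr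
  have hk2 : k ≤ d2 * vs :=
    le_of_sq_add_le_mul_sub_sub (by positivity) (by positivity) hQ hk
      (hdiscr.trans_eq (mul_comm _ _))
  convert posSemidef_of_schur_complement hws.le (sub_nonneg.2 hk1) (sub_nonneg.2 hk2) hdiscr
    using 1
  rw [hB]
  ext i j
  fin_cases i <;> fin_cases j <;> simp <;> ring

/-- Positive semidefiniteness of the matrix `B` of gradient terms in the
Lyapunov functional estimate, under the smallness condition on `ξ, χ`. -/
theorem B_posSemidef (d1 d2 us vs ws ξ χ u v : ℝ)
    (hd1 : 0 < d1) (hd2 : 0 < d2) (hus : 0 < us) (hvs : 0 < vs) (hws : 0 < ws)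
    (hξ : 0 ≤ ξ) (hχ : 0 ≤ χ) (hu : 0 ≤ u) (hv : 0 ≤ v)
    (hcond : ξ * χ ^ 2 * vs * ws * u ^ 3 * v ^ 2
      + χ ^ 2 * ws * (d1 * us + d2 * vs) * u ^ 2 * v ^ 2
      + ξ ^ 2 * vs ^ 2 * u ^ 2 ≤ 4 * d1 * d2 * us * vs)
    (B : Matrix (Fin 3) (Fin 3) ℝ)
    (hB : B = !![d1 * us, -(ξ * vs * u) / 2, -(χ * ws * u * v) / 2;
                 -(ξ * vs * u) / 2, d2 * vs, -(χ * ws * u * v) / 2;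
                 -(χ * ws * u * v) / 2, -(χ * ws * u * v) / 2, ws]) :
    B.PosSemidef :=
  B_posSemidef_general d1 d2 us vs ws ξ χ u v hd1 hd2 hus hvs hws hξ hu hcond B hB
end

section
/- Let 0 < b2 < √2. Then the system of equations 1 - u = 0, 1 - v + u - b2·w = 0, 1 - w + v + u/(u + w) = 0 has exactly one solution (u, v, w) ∈ ℝ³ with u > 0, v > 0, w > 0, namely u = 1, v = (b2² + 2·b2 + 4 - b2·√((b2 + 2)(b2 + 10)))/(2(b2 + 1)), w = (2 - b2 + √((b2 + 2)(b2 + 10)))/(2(b2 + 1)). -/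
/-!
With `u = 1` the second equation gives `v = 2 - b2 * w`, and clearing the denominator `1 + w`
turns the third into `(b2 + 1) w² + (b2 - 2) w - 4 = 0`, whose discriminant is
`(b2 + 2)(b2 + 10)`. The product of its roots is negative, so exactly one root is positive, and
at that root `v = 2 - b2 * w` is positive precisely because `b2² < 2`.
-/

theorem quadratic_pos_root_iff {K : Type*} [Field K] [LinearOrder K] [IsStrictOrderedRing K]
    {a b c s x : K} (ha : 0 < a) (hc : c < 0) (hs : 0 ≤ s) (h : discrim a b c = s * s) :
    (0 < x ∧ a * (x * x) + b * x + c = 0) ↔ x = (-b + s) / (2 * a) := by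
  have hbs : |b| < s := abs_lt_of_sq_lt_sq (by rw [discrim] at h; nlinarith) hs
  obtain ⟨hsb, hbs⟩ := abs_lt.mp hbs
  rw [quadratic_eq_zero_iff ha.ne' h]
  constructor
  · rintro ⟨hx, rfl | rfl⟩
    · rfl
    · exact absurd hx (div_neg_of_neg_of_pos (by linarith) (by positivity)).not_gt
  · rintro rfl
    exact ⟨div_pos (by linarith) (by positivity), Or.inl rfl⟩

theorem steady_state_iff_quadratic (b2 u v w : ℝ) :
    (0 < u ∧ 0 < v ∧ 0 < w ∧
        1 - u = 0 ∧ 1 - v + u - b2 * w = 0 ∧ 1 - w + v + u / (u + w) = 0) ↔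
      u = 1 ∧ v = 2 - b2 * w ∧ 0 < 2 - b2 * w ∧
        (0 < w ∧ (b2 + 1) * (w * w) + (b2 - 2) * w + -4 = 0) := by
  constructor
  · rintro ⟨-, hv, hw, hu, hvw, h⟩
    obtain rfl : u = 1 := by linarith
    obtain rfl : v = 2 - b2 * w := by linarith
    refine ⟨rfl, rfl, hv, hw, ?_⟩
    field_simp at h
    linear_combination -h
  · rintro ⟨rfl, rfl, hv, hw, h⟩
    refine ⟨one_pos, hv, hw, by ring, by ring, ?_⟩
    field_simp
    linear_combination -h

theorem two_sub_mul_root_eq {b2 : ℝ} (hb2 : b2 + 1 ≠ 0) (s : ℝ) :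
    2 - b2 * ((2 - b2 + s) / (2 * (b2 + 1))) =
      (b2 ^ 2 + 2 * b2 + 4 - b2 * s) / (2 * (b2 + 1)) := by
  field_simp
  ring

theorem mul_sqrt_lt_of_sq_lt_two {b2 : ℝ} (hb2 : 0 < b2) (hb2' : b2 ^ 2 < 2) :
    b2 * √((b2 + 2) * (b2 + 10)) < b2 ^ 2 + 2 * b2 + 4 := by
  have hX : (0 : ℝ) ≤ (b2 + 2) * (b2 + 10) := by positivity
  refine lt_of_pow_lt_pow_left₀ 2 (by positivity) ?_
  rw [mul_pow, Real.sq_sqrt hX]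
  nlinarith [show (b2 ^ 2 + 2 * b2 + 4) ^ 2 - b2 ^ 2 * ((b2 + 2) * (b2 + 10))
    = 8 * (2 - b2 ^ 2) * (b2 + 1) by ring]

/-- The coexistence steady-state system in the intraguild-predation case with
`b1 = b3 = 0`, `c3 = 1` has exactly one positive solution, given explicitly. -/
theorem intraguild_steady_state_unique (b2 : ℝ) (hb2 : 0 < b2)
    (hb2' : b2 < Real.sqrt 2) :
    ∀ u v w : ℝ,
      (0 < u ∧ 0 < v ∧ 0 < w ∧
        1 - u = 0 ∧ 1 - v + u - b2 * w = 0 ∧ 1 - w + v + u / (u + w) = 0) ↔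
      (u = 1 ∧
       v = (b2 ^ 2 + 2 * b2 + 4 - b2 * Real.sqrt ((b2 + 2) * (b2 + 10)))
             / (2 * (b2 + 1)) ∧
       w = (2 - b2 + Real.sqrt ((b2 + 2) * (b2 + 10))) / (2 * (b2 + 1))) := by
  intro u v w
  set s := √((b2 + 2) * (b2 + 10))
  have hdisc : discrim (b2 + 1) (b2 - 2) (-4) = s * s := by
    rw [Real.mul_self_sqrt (by positivity), discrim]
    ring
  have hv : 2 - b2 * ((2 - b2 + s) / (2 * (b2 + 1))) =
      (b2 ^ 2 + 2 * b2 + 4 - b2 * s) / (2 * (b2 + 1)) := two_sub_mul_root_eq (by positivity) s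
  have hv_pos : 0 < (b2 ^ 2 + 2 * b2 + 4 - b2 * s) / (2 * (b2 + 1)) :=
    div_pos (sub_pos.mpr (mul_sqrt_lt_of_sq_lt_two hb2 ((Real.lt_sqrt hb2.le).mp hb2')))
      (by positivity)
  rw [steady_state_iff_quadratic,
    quadratic_pos_root_iff (by positivity) (by norm_num) (Real.sqrt_nonneg _) hdisc, neg_sub]
  constructor
  · rintro ⟨rfl, rfl, -, rfl⟩
    exact ⟨rfl, hv, rfl⟩
  · rintro ⟨rfl, rfl, rfl⟩
    exact ⟨rfl, hv.symm, hv ▸ hv_pos, rfl⟩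
end

section
/- Let 1/10 ≤ b2 < √2, let s ≥ √2/2, and set w̄ = (2 - b2 + √((b2 + 2)(b2 + 10)))/(2(b2 + 1)). Then the symmetric 3×3 real matrix with rows (1, -1/2, -w̄/(2(1 + w̄)·s)), (-1/2, 1, (b2 - 1)/2), (-w̄/(2(1 + w̄)·s), (b2 - 1)/2, 1 + 1/((1 + w̄)·s)) is positive definite. -/
/-!
The matrix has unit leading entry and leading 2×2 minor `3/4`, so by Sylvester's criterion it
suffices that its determinant `3/4 · d + m c - m² - c²` is positive, where `m` is the
`(1,3)` entry (negated), `c = (b2 - 1)/2` and `d ≥ 1`. Since `w̄ ≤ 3` for `b2 ≥ 1/12`, we get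
`w̄ / (1 + w̄) ≤ 3/4`, and with `2 s ≥ √2` this gives `m² ≤ 9/32`; together with
`-9/20 ≤ c ≤ 1/4` that keeps the determinant positive.
-/

open Matrix

theorem Matrix.posDef_fin_three_of_minors_pos {p q d a b c : ℝ} (hp : 0 < p)
    (hpq : 0 < p * q - a ^ 2) (hdet : 0 < !![p, a, b; a, q, c; b, c, d].det) :
    !![p, a, b; a, q, c; b, c, d].PosDef := by
  refine .of_dotProduct_mulVec_pos ?_ fun x hx => ?_
  · ext i j
    fin_cases i <;> fin_cases j <;> rfl
  set r := p * q - a ^ 2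
  set δ := !![p, a, b; a, q, c; b, c, d].det
  have hsquares : p * r * (star x ⬝ᵥ !![p, a, b; a, q, c; b, c, d] *ᵥ x) =
      r * (p * x 0 + a * x 1 + b * x 2) ^ 2 + (r * x 1 + (p * c - a * b) * x 2) ^ 2
        + p * δ * x 2 ^ 2 := by
    simp only [dotProduct, Pi.star_apply, star_trivial, mulVec, of_apply, cons_val',
      cons_val_fin_one, Fin.sum_univ_three, Fin.isValue, cons_val_zero, cons_val_one, cons_val,
      det_fin_three, r, δ]
    ring
  refine (mul_pos_iff_of_pos_left (mul_pos hp hpq)).mp (hsquares ▸ ?_)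
  have h₁ := mul_nonneg hpq.le (sq_nonneg (p * x 0 + a * x 1 + b * x 2))
  have h₂ := sq_nonneg (r * x 1 + (p * c - a * b) * x 2)
  have h₃ := mul_nonneg (mul_pos hp hdet).le (sq_nonneg (x 2))
  by_cases hx₂ : x 2 = 0
  · by_cases hx₁ : x 1 = 0
    · have hx₀ : x 0 ≠ 0 := fun hx₀ => hx (by ext i; fin_cases i <;> assumption)
      have := mul_pos hpq (sq_pos_of_ne_zero (mul_ne_zero hp.ne' hx₀))
      simp only [hx₁, hx₂, mul_zero, add_zero, ne_eq, OfNat.ofNat_ne_zero, not_false_eq_true,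
        zero_pow] at this ⊢
      exact this
    · have := sq_pos_of_ne_zero (mul_ne_zero hpq.ne' hx₁)
      simp only [hx₂, mul_zero, add_zero, ne_eq, OfNat.ofNat_ne_zero, not_false_eq_true,
        zero_pow] at h₁ ⊢
      linarith
  · have := mul_pos (mul_pos hp hdet) (sq_pos_of_ne_zero hx₂)
    linarith

lemma coexistence_w_nonneg {b : ℝ} (hb : -1 < b) :
    0 ≤ (2 - b + √((b + 2) * (b + 10))) / (2 * (b + 1)) := by
  have hsqrt : |b - 2| ≤ √((b + 2) * (b + 10)) := Real.abs_le_sqrt (by nlinarith)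
  have := le_abs_self (b - 2)
  apply div_nonneg <;> linarith

lemma coexistence_w_le_three {b : ℝ} (hb : 1 / 12 ≤ b) :
    (2 - b + √((b + 2) * (b + 10))) / (2 * (b + 1)) ≤ 3 := by
  have hsqrt : √((b + 2) * (b + 10)) ≤ 7 * b + 4 :=
    Real.sqrt_le_iff.mpr ⟨by linarith, by nlinarith⟩
  rw [div_le_iff₀ (by linarith)]
  linarith

lemma sq_div_two_mul_one_add_mul_le {w s : ℝ} (hw : 0 ≤ w) (hw3 : w ≤ 3)
    (hs : √2 / 2 ≤ s) :
    (w / (2 * (1 + w) * s)) ^ 2 ≤ 9 / 32 := by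
  have hs₀ : 0 < s := lt_of_lt_of_le (by positivity) hs
  have hfrac : w / (1 + w) ≤ 3 / 4 := by rw [div_le_iff₀ (by linarith)]; linarith
  have h2s : 2 ≤ (2 * s) ^ 2 :=
    calc (2 : ℝ) = √2 ^ 2 := (Real.sq_sqrt zero_le_two).symm
      _ ≤ (2 * s) ^ 2 := pow_le_pow_left₀ (Real.sqrt_nonneg 2) (by linarith) 2
  rw [show w / (2 * (1 + w) * s) = w / (1 + w) / (2 * s) by field_simp, div_pow,
    div_le_iff₀ (by positivity)]
  nlinarith [div_nonneg hw (show 0 ≤ 1 + w by linarith)]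

lemma det_lyapunov_pos {m c d : ℝ} (hm : m ^ 2 ≤ 9 / 32) (hc : -9 / 20 ≤ c)
    (hc' : c ≤ 1 / 4) (hd : 1 ≤ d) : 0 < !![1, -(1 / 2), -m; -(1 / 2), 1, c; -m, c, d].det := by
  have hdet : !![1, -(1 / 2), -m; -(1 / 2), 1, c; -m, c, d].det =
      3 / 4 * d + m * c - m ^ 2 - c ^ 2 := by
    simp only [one_div, det_fin_three, Fin.isValue, of_apply, cons_val', cons_val_zero,
      cons_val_fin_one, cons_val_one, mul_one, cons_val, one_mul, mul_neg, neg_mul, neg_neg]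
    ring
  obtain ⟨hm₁, hm₂⟩ := abs_le.mp (abs_le_of_sq_le_sq (by linarith) (by norm_num) :
    |m| ≤ 27 / 50)
  rw [hdet]
  nlinarith [mul_nonneg (sub_nonneg.2 hm₂) (sub_nonneg.2 hc),
    mul_nonneg (sub_nonneg.2 hm₁) (sub_nonneg.2 hc'),
    mul_nonneg (sub_nonneg.2 hc) (sub_nonneg.2 hc')]

/-- Positive definiteness of the Lyapunov matrix `Ã₂` in the
intraguild-predation case with `b1 = b3 = 0`, `c3 = 1`. -/
theorem A2tilde_posDef (b2 s : ℝ) (hb2 : 1 / 10 ≤ b2) (hb2' : b2 < Real.sqrt 2)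
    (hs : Real.sqrt 2 / 2 ≤ s)
    (wbar : ℝ)
    (hwbar : wbar = (2 - b2 + Real.sqrt ((b2 + 2) * (b2 + 10))) / (2 * (b2 + 1)))
    (A : Matrix (Fin 3) (Fin 3) ℝ)
    (hA : A = !![1, -(1/2), -wbar / (2 * (1 + wbar) * s);
                 -(1/2), 1, (b2 - 1) / 2;
                 -wbar / (2 * (1 + wbar) * s), (b2 - 1) / 2,
                   1 + 1 / ((1 + wbar) * s)]) :
    A.PosDef := by
  have hb2_le : b2 ≤ 3 / 2 := hb2'.le.trans (Real.sqrt_le_iff.mpr ⟨by norm_num, by norm_num⟩)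
  have hw₀ : 0 ≤ wbar := hwbar ▸ coexistence_w_nonneg (by linarith)
  have hw₃ : wbar ≤ 3 := hwbar ▸ coexistence_w_le_three (by linarith)
  have hs₀ : 0 < s := lt_of_lt_of_le (by positivity) hs
  have hd : 1 ≤ 1 + 1 / ((1 + wbar) * s) :=
    le_add_of_nonneg_right (div_nonneg zero_le_one (mul_nonneg (by linarith) hs₀.le))
  rw [hA, neg_div]
  exact Matrix.posDef_fin_three_of_minors_pos one_pos (by norm_num)
    (det_lyapunov_pos (sq_div_two_mul_one_add_mul_le hw₀ hw₃ hs) (by linarith) (by linarith) hd)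
end
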